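/- arXiv:1909.11325 — 4 statements merged into one kernel-verified Lean document; each statement's English description precedes it below -/
import Mathlib

section
/- For any graphs G and H, the independence number of the lexicographic product satisfies α(G∘H) = α(G)·α(H). -/
open SimpleGraph

/-- The lexicographic product of simple graphs. -/
def SimpleGraph.lexProd {α β : Type*} (G : SimpleGraph α) (H : SimpleGraph β) :
    SimpleGraph (α × β) where
  Adj x y := G.Adj x.1 y.1 ∨ (x.1 = y.1 ∧ H.Adj x.2 y.2)
  symm := ⟨by
    rintro ⟨g1, h1⟩ ⟨g2, h2⟩ (h | ⟨rfl, h⟩)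
    · exact Or.inl h.symm
    · exact Or.inr ⟨rfl, h.symm⟩⟩
  loopless := ⟨by
    rintro ⟨g, h⟩ (h' | ⟨-, h'⟩)
    · exact G.irrefl h'
    · exact H.irrefl h'⟩

/-- A set of vertices is independent if its vertices are pairwise non-adjacent. -/
def SimpleGraph.IndepSet {α : Type*} (G : SimpleGraph α) (s : Set α) : Prop :=
  ∀ u ∈ s, ∀ v ∈ s, u ≠ v → ¬ G.Adj u v

/-- The independence number: the largest cardinality of an independent set. -/
noncomputable def SimpleGraph.indepNum' {α : Type*} [Fintype α] (G : SimpleGraph α) : ℕ :=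
  sSup {n | ∃ s : Finset α, G.IndepSet ↑s ∧ s.card = n}

/-- An `i`-packing: a set of vertices pairwise at distance greater than `i`. -/
def SimpleGraph.IsPacking {α : Type*} (G : SimpleGraph α) (i : ℕ) (s : Set α) : Prop :=
  ∀ u ∈ s, ∀ v ∈ s, u ≠ v → i < G.dist u v

/-- The `i`-packing number: the largest cardinality of an `i`-packing. -/
noncomputable def SimpleGraph.packingNum {α : Type*} [Fintype α] (G : SimpleGraph α)
    (i : ℕ) : ℕ :=
  sSup {n | ∃ s : Finset α, G.IsPacking i ↑s ∧ s.card = n}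

/-- A `k`-packing coloring: colors in `{1, …, k}`, and any two distinct vertices sharing
color `i` are at distance greater than `i`. -/
def SimpleGraph.IsPackingColoring {α : Type*} (G : SimpleGraph α) (k : ℕ) (c : α → ℕ) :
    Prop :=
  (∀ v, c v ∈ Finset.Icc 1 k) ∧ ∀ u v, u ≠ v → c u = c v → c u < G.dist u v

/-- The packing chromatic number: the least `k` admitting a `k`-packing coloring. -/
noncomputable def SimpleGraph.packingChromatic {α : Type*} (G : SimpleGraph α) : ℕ :=
  sInf {k | ∃ c : α → ℕ, G.IsPackingColoring k c}

/-- `d(G) = 1` if `G` is complete, and `diam(G) - 1` otherwise. -/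
noncomputable def SimpleGraph.dval {α : Type*} [Fintype α] (G : SimpleGraph α) : ℕ :=
  letI := Classical.dec (G = (⊤ : SimpleGraph α))
  if G = (⊤ : SimpleGraph α) then 1 else G.diam - 1

/-!
An independent set of `G ∘ H` projects onto an independent set of `G`, and each of its fibres
over a vertex of `G` is an independent set of `H`; counting fibres gives `α(G ∘ H) ≤ α(G) α(H)`.
Conversely the product of independent sets of `G` and `H` is independent in `G ∘ H`.
-/

open Finset

namespace SimpleGraph

variable {α β : Type*} {G : SimpleGraph α} {H : SimpleGraph β}

theorem indepSet_iff_isIndepSet {s : Set α} : G.IndepSet s ↔ G.IsIndepSet s := Iff.rfl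

theorem indepNum'_eq_indepNum [Fintype α] (G : SimpleGraph α) : G.indepNum' = G.indepNum := by
  simp only [indepNum', indepNum, isNIndepSet_iff, indepSet_iff_isIndepSet]

theorem IsIndepSet.lexProd {s : Set α} {t : Set β} (hs : G.IsIndepSet s) (ht : H.IsIndepSet t) :
    (G.lexProd H).IsIndepSet (s ×ˢ t) := by
  rintro ⟨a, b⟩ ⟨ha, hb⟩ ⟨c, d⟩ ⟨hc, hd⟩ hne (hadj | ⟨rfl, hadj⟩)
  · exact hs ha hc (G.ne_of_adj hadj) hadj
  · exact ht hb hd (fun hbd => hne (Prod.ext rfl hbd)) hadj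

theorem IsIndepSet.image_fst_of_lexProd {s : Set (α × β)} (hs : (G.lexProd H).IsIndepSet s) :
    G.IsIndepSet (Prod.fst '' s) := by
  rintro _ ⟨p, hp, rfl⟩ _ ⟨q, hq, rfl⟩ hne hadj
  exact hs hp hq (ne_of_apply_ne Prod.fst hne) (Or.inl hadj)

theorem IsIndepSet.card_fiber_fst_le_indepNum [Finite β] [DecidableEq α] {u : Finset (α × β)}
    (hu : (G.lexProd H).IsIndepSet u) (a : α) : #{p ∈ u | p.1 = a} ≤ H.indepNum := by
  classical
  have hinj : Set.InjOn Prod.snd (↑{p ∈ u | p.1 = a} : Set (α × β)) := by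
    intro p hp q hq hpq
    simp only [coe_filter, Set.mem_ofPred_eq] at hp hq
    exact Prod.ext (hp.2.trans hq.2.symm) hpq
  have hindep : H.IsIndepSet (↑({p ∈ u | p.1 = a}.image Prod.snd) : Set β) := by
    rw [coe_image, isIndepSet_iff, hinj.pairwise_image]
    intro p hp q hq hne hadj
    simp only [coe_filter, Set.mem_ofPred_eq] at hp hq
    exact hu hp.1 hq.1 hne (Or.inr ⟨hp.2.trans hq.2.symm, hadj⟩)
  rw [← card_image_of_injOn hinj]
  exact hindep.card_le_indepNum

theorem IsIndepSet.card_le_indepNum_mul_indepNum [Finite α] [Finite β] {u : Finset (α × β)}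
    (hu : (G.lexProd H).IsIndepSet u) : #u ≤ G.indepNum * H.indepNum := by
  classical
  have hfst : G.IsIndepSet (↑(u.image Prod.fst) : Set α) := by
    rw [coe_image]
    exact hu.image_fst_of_lexProd
  calc #u ≤ H.indepNum * #(u.image Prod.fst) :=
        card_le_mul_card_image u _ fun a _ => hu.card_fiber_fst_le_indepNum a
    _ ≤ H.indepNum * G.indepNum := Nat.mul_le_mul_left _ hfst.card_le_indepNum
    _ = G.indepNum * H.indepNum := Nat.mul_comm _ _

theorem indepNum_lexProd_eq [Finite α] [Finite β] (G : SimpleGraph α) (H : SimpleGraph β) :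
    (G.lexProd H).indepNum = G.indepNum * H.indepNum := by
  obtain ⟨u, hu⟩ := (G.lexProd H).exists_isNIndepSet_indepNum
  obtain ⟨s, hs⟩ := G.exists_isNIndepSet_indepNum
  obtain ⟨t, ht⟩ := H.exists_isNIndepSet_indepNum
  refine le_antisymm ?_ ?_
  · exact hu.card_eq ▸ hu.isIndepSet.card_le_indepNum_mul_indepNum
  · rw [← hs.card_eq, ← ht.card_eq, ← card_product]
    apply IsIndepSet.card_le_indepNum
    rw [coe_product]
    exact hs.isIndepSet.lexProd ht.isIndepSet

end SimpleGraph

theorem indepNum_lexProd {α β : Type*} [Fintype α] [Fintype β]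
    (G : SimpleGraph α) (H : SimpleGraph β) :
    (G.lexProd H).indepNum' = G.indepNum' * H.indepNum' := by
  simp only [indepNum'_eq_indepNum, indepNum_lexProd_eq]
end

section
/- For positive integers n and m with m ≥ 2, χ_ρ(P_n∘K_m) ≤ nm − ⌈n/2⌉ − Σ_{i=2}^{m} ⌈n/(i+1)⌉ − ⌊(⌊n/2⌋ − 1)/(⌊(m+1)/2⌋ + 1)⌋ + m. -/
/-!
Write the vertices of `P_n ∘ K_m` as `(p, r)`: position `p < n` on the path, copy `r < m` of it.
Give colour `1` to the even positions of copy `0`, colour `r + 1` to the multiples of `r + 2` in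
copy `r ≥ 1`, and colour `m + 1` to the positions `≡ 1` modulo `d = 2 (⌊(m + 1)/2⌋ + 1)` in copy
`0`; since `d` is even these are odd, and `d ≥ m + 2`. Each colour class lies in one copy and its
positions are congruent modulo a period exceeding the colour, while distances in `P_n ∘ K_m` are
at least the distances of the positions, so each class is a packing. Giving every other vertex
its own new colour uses `m + 1 + (nm - #coloured)` colours, and the classes have sizes
`⌈n/2⌉`, `⌈n/(i+1)⌉` for `2 ≤ i ≤ m`, and `⌊(n - 2)/d⌋ + 1`. For `n = 1` the bound is `|V| = m`.
-/

open SimpleGraph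

open Finset

namespace SimpleGraph

section PackingColoring

variable {V : Type*} [Fintype V] (G : SimpleGraph V)

theorem packingChromatic_le_add_card_uncolored (k : ℕ) (c : V → ℕ)
    (hc : ∀ i ∈ Icc 1 k, G.IsPacking i {v | c v = i}) :
    G.packingChromatic ≤ k + #{v | c v ∉ Icc 1 k} := by
  classical
  set W : Finset V := {v | c v ∉ Icc 1 k}
  let g : V → ℕ := fun v => if h : v ∈ W then W.equivFin ⟨v, h⟩ else 0
  have hg_lt : ∀ v ∈ W, g v < #W := fun v hv => by simp [g, hv]
  have hg_inj : Set.InjOn g W := fun u (hu : u ∈ W) v (hv : v ∈ W) h => by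
    simp only [g, dif_pos hu, dif_pos hv] at h
    exact congrArg Subtype.val (W.equivFin.injective (Fin.ext h))
  refine Nat.sInf_le ⟨fun v => if c v ∈ Icc 1 k then c v else k + 1 + g v,
    fun v => ?_, fun u v huv h => ?_⟩
  · dsimp only
    split_ifs with hv
    · simp only [mem_Icc] at hv ⊢; omega
    · have := hg_lt v (by simpa [W] using hv)
      simp only [mem_Icc]; omega
  · by_cases hu : c u ∈ Icc 1 k <;> by_cases hv : c v ∈ Icc 1 k <;>
      simp only [hu, hv, if_true, if_false] at h ⊢ <;> simp only [mem_Icc] at hu hv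
    · exact hc _ (by simpa using hu) u rfl v h.symm huv
    · omega
    · omega
    · exact absurd (hg_inj (by simpa [W] using hu) (by simpa [W] using hv) (by omega)) huv

theorem packingChromatic_add_sum_card_le (k : ℕ) (c : V → ℕ)
    (hc : ∀ i ∈ Icc 1 k, G.IsPacking i {v | c v = i}) :
    G.packingChromatic + ∑ i ∈ Icc 1 k, #{v | c v = i} ≤ k + Fintype.card V := by
  classical
  have hcolored : ∑ i ∈ Icc 1 k, #{v | c v = i} = #{v | c v ∈ Icc 1 k} := by
    rw [card_eq_sum_card_fiberwise (s := {v | c v ∈ Icc 1 k}) (t := Icc 1 k) (f := c)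
      fun v hv => by simpa using hv]
    refine sum_congr rfl fun i hi => congrArg card ?_
    ext v
    simp only [mem_filter, mem_univ, true_and, iff_and_self]
    exact fun h => h ▸ hi
  have hsplit := card_filter_add_card_filter_not (s := univ) (fun v => c v ∈ Icc 1 k)
  rw [card_univ] at hsplit
  have := G.packingChromatic_le_add_card_uncolored k c hc
  omega

theorem packingChromatic_le_card : G.packingChromatic ≤ Fintype.card V := by
  simpa using G.packingChromatic_le_add_card_uncolored 0 (fun _ => 0) (by simp)

end PackingColoring

section LexProd

variable {α β : Type*} {G : SimpleGraph α} {H : SimpleGraph β}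

theorem lexProd_preconnected (hG : G.Preconnected) (hH : H.Preconnected) :
    (G.lexProd H).Preconnected := by
  rintro ⟨g₁, h₁⟩ ⟨g₂, h₂⟩
  let ι₁ : G →g G.lexProd H := ⟨fun g => (g, h₁), Or.inl⟩
  let ι₂ : H →g G.lexProd H := ⟨fun h => (g₂, h), fun hh => Or.inr ⟨rfl, hh⟩⟩
  exact ((hG g₁ g₂).map ι₁).trans ((hH h₁ h₂).map ι₂)

theorem Walk.exists_walk_fst_length_le {u v : α × β} (p : (G.lexProd H).Walk u v) :
    ∃ q : G.Walk u.1 v.1, q.length ≤ p.length := by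
  induction p with
  | nil => exact ⟨nil, le_rfl⟩
  | cons h _ ih =>
    obtain ⟨q, hq⟩ := ih
    rw [Walk.length_cons]
    rcases h with h | ⟨h, -⟩
    · exact ⟨cons h q, by rw [Walk.length_cons]; omega⟩
    · exact ⟨q.copy h.symm rfl, by rw [Walk.length_copy]; omega⟩

theorem dist_fst_le_dist_lexProd {u v : α × β} (h : (G.lexProd H).Reachable u v) :
    G.dist u.1 v.1 ≤ (G.lexProd H).dist u v := by
  obtain ⟨p, hp⟩ := h.exists_walk_length_eq_dist
  obtain ⟨q, hq⟩ := p.exists_walk_fst_length_le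
  exact hp ▸ (dist_le q).trans hq

end LexProd

theorem Walk.val_le_add_length_pathGraph {n : ℕ} {u v : Fin n} (p : (pathGraph n).Walk u v) :
    (v : ℕ) ≤ u + p.length := by
  induction p with
  | nil => simp
  | cons h _ ih =>
    rw [pathGraph_adj] at h
    simp only [length_cons]
    omega

theorem val_le_add_dist_pathGraph {n : ℕ} (u v : Fin n) :
    (v : ℕ) ≤ u + (pathGraph n).dist u v := by
  obtain ⟨p, hp⟩ := (pathGraph_preconnected n u v).exists_walk_length_eq_dist
  exact hp ▸ p.val_le_add_length_pathGraph

end SimpleGraph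

theorem Nat.card_filter_range_mod_eq {n t a : ℕ} (ha : a < t) :
    #{p ∈ range n | p % t = a} = (n + (t - 1 - a)) / t := by
  have hcount := Nat.count_modEq_card n (by omega : 0 < t) a
  simp only [Nat.count_eq_card_filter_range, Nat.ModEq, Nat.mod_eq_of_lt ha] at hcount
  have hdiv : (t - 1 - a) / t = 0 := Nat.div_eq_of_lt (by omega)
  have hmod : (t - 1 - a) % t = t - 1 - a := Nat.mod_eq_of_lt (by omega)
  rw [Nat.add_div (by omega), hdiv, hmod, hcount]
  split_ifs <;> omega

open SimpleGraph

def layerResidues (n m r t a : ℕ) : Finset (Fin n × Fin m) :=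
  {v | (v.2 : ℕ) = r ∧ (v.1 : ℕ) % t = a}

theorem card_layerResidues {n m r : ℕ} (hr : r < m) (t a : ℕ) :
    #(layerResidues n m r t a) = #{p ∈ range n | p % t = a} := by
  refine card_bij (fun v _ => (v.1 : ℕ)) (fun v hv => ?_) (fun v hv w hw h => ?_) fun p hp => ?_
  · simp only [layerResidues, mem_filter, mem_univ, true_and, mem_range] at hv ⊢
    exact ⟨v.1.isLt, hv.2⟩
  · simp only [layerResidues, mem_filter, mem_univ, true_and] at hv hw
    exact Prod.ext (Fin.ext h) (Fin.ext (hv.1.trans hw.1.symm))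
  · simp only [mem_filter, mem_range] at hp
    exact ⟨(⟨p, hp.1⟩, ⟨r, hr⟩), by simp [layerResidues, hp.2], rfl⟩

theorem isPacking_layerResidues {n m : ℕ} {H : SimpleGraph (Fin m)} (hH : H.Preconnected)
    {i t : ℕ} (hit : i < t) (r a : ℕ) :
    ((pathGraph n).lexProd H).IsPacking i (layerResidues n m r t a) := by
  intro u hu v hv huv
  simp only [layerResidues, coe_filter_univ, Set.mem_ofPred_eq] at hu hv
  have hne : (u.1 : ℕ) ≠ v.1 := fun h =>
    huv (Prod.ext (Fin.ext h) (Fin.ext (hu.1.trans hv.1.symm)))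
  have hfar : t ≤ (u.1 : ℕ) - v.1 ∨ t ≤ (v.1 : ℕ) - u.1 := by
    rcases lt_or_gt_of_ne hne with h | h
    · exact .inr (Nat.le_of_dvd (by omega) ((Nat.modEq_iff_dvd' h.le).1 (hu.2.trans hv.2.symm)))
    · exact .inl (Nat.le_of_dvd (by omega) ((Nat.modEq_iff_dvd' h.le).1 (hv.2.trans hu.2.symm)))
  have hdist := dist_fst_le_dist_lexProd (lexProd_preconnected (pathGraph_preconnected n) hH u v)
  have hv_le := val_le_add_dist_pathGraph u.1 v.1
  have hu_le := val_le_add_dist_pathGraph v.1 u.1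
  rw [dist_comm] at hu_le
  omega

/-- `0` marks an uncoloured vertex. -/
def pathLexCompleteColoring (n m : ℕ) (v : Fin n × Fin m) : ℕ :=
  if (v.2 : ℕ) = 0 then
    if (v.1 : ℕ) % 2 = 0 then 1
    else if (v.1 : ℕ) % (2 * ((m + 1) / 2 + 1)) = 1 then m + 1 else 0
  else if (v.1 : ℕ) % ((v.2 : ℕ) + 2) = 0 then (v.2 : ℕ) + 1 else 0

section pathLexCompleteColoring

variable {n m : ℕ}

theorem filter_pathLexCompleteColoring_eq_one :
    ({v | pathLexCompleteColoring n m v = 1} : Finset (Fin n × Fin m)) =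
      layerResidues n m 0 2 0 := by
  ext v
  simp only [layerResidues, mem_filter, mem_univ, true_and]
  grind [pathLexCompleteColoring]

theorem filter_pathLexCompleteColoring_eq_of_le {i : ℕ} (h2i : 2 ≤ i) (him : i ≤ m) :
    ({v | pathLexCompleteColoring n m v = i} : Finset (Fin n × Fin m)) =
      layerResidues n m (i - 1) (i + 1) 0 := by
  ext v
  simp only [layerResidues, mem_filter, mem_univ, true_and]
  grind [pathLexCompleteColoring]

theorem filter_pathLexCompleteColoring_eq_add_one :
    ({v | pathLexCompleteColoring n m v = m + 1} : Finset (Fin n × Fin m)) =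
      layerResidues n m 0 (2 * ((m + 1) / 2 + 1)) 1 := by
  ext v
  have hodd : (v.1 : ℕ) % (2 * ((m + 1) / 2 + 1)) % 2 = (v.1 : ℕ) % 2 :=
    Nat.mod_mod_of_dvd _ (dvd_mul_right 2 _)
  simp only [layerResidues, mem_filter, mem_univ, true_and]
  grind [pathLexCompleteColoring]

theorem isPacking_pathLexCompleteColoring {H : SimpleGraph (Fin m)} (hH : H.Preconnected) :
    ∀ i ∈ Icc 1 (m + 1),
      ((pathGraph n).lexProd H).IsPacking i {v | pathLexCompleteColoring n m v = i} := by
  intro i hi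
  rw [mem_Icc] at hi
  rw [← coe_filter_univ]
  obtain rfl | h1i := eq_or_ne i 1
  · rw [filter_pathLexCompleteColoring_eq_one]
    exact isPacking_layerResidues hH (by norm_num) _ _
  obtain rfl | him := eq_or_ne i (m + 1)
  · rw [filter_pathLexCompleteColoring_eq_add_one]
    exact isPacking_layerResidues hH (by omega) _ _
  · rw [filter_pathLexCompleteColoring_eq_of_le (by omega) (by omega)]
    exact isPacking_layerResidues hH (by omega) _ _

theorem sum_card_filter_pathLexCompleteColoring (hn : 2 ≤ n) (hm : 1 ≤ m) :
    ∑ i ∈ Icc 1 (m + 1), #{v | pathLexCompleteColoring n m v = i} =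
      (n + 1) / 2 + ∑ i ∈ Icc 2 m, (n + i) / (i + 1) +
        ((n / 2 - 1) / ((m + 1) / 2 + 1) + 1) := by
  rw [sum_Icc_succ_top (by omega), ← add_sum_Ioc_eq_sum_Icc hm, ← Icc_add_one_left_eq_Ioc,
    filter_pathLexCompleteColoring_eq_one, filter_pathLexCompleteColoring_eq_add_one,
    card_layerResidues (by omega), card_layerResidues (by omega),
    Nat.card_filter_range_mod_eq (by norm_num), Nat.card_filter_range_mod_eq (by omega)]
  congr 1
  · congr 1
    refine sum_congr rfl fun i hi => ?_
    rw [mem_Icc] at hi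
    rw [filter_pathLexCompleteColoring_eq_of_le hi.1 hi.2, card_layerResidues (by omega),
      Nat.card_filter_range_mod_eq (by omega)]
    congr 1
  · rw [show n + (2 * ((m + 1) / 2 + 1) - 1 - 1) = n - 2 + 1 * (2 * ((m + 1) / 2 + 1)) by omega,
      Nat.add_mul_div_right _ _ (by positivity), ← Nat.div_div_eq_div_mul,
      show (n - 2) / 2 = n / 2 - 1 by omega]

end pathLexCompleteColoring

theorem packingChromatic_path_lexProd_complete (n m : ℕ) (hn : 0 < n) (hm : 2 ≤ m) :
    (((pathGraph n).lexProd (⊤ : SimpleGraph (Fin m))).packingChromatic : ℤ) ≤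
      (n * m : ℤ) - (((n + 1) / 2 : ℕ) : ℤ)
        - ∑ i ∈ Finset.Icc 2 m, (((n + i) / (i + 1) : ℕ) : ℤ)
        - (((n / 2 - 1) / ((m + 1) / 2 + 1) : ℕ) : ℤ) + (m : ℤ) := by
  rcases Nat.lt_or_ge n 2 with hn1 | hn2
  · obtain rfl : n = 1 := by omega
    have hχ := packingChromatic_le_card ((pathGraph 1).lexProd (⊤ : SimpleGraph (Fin m)))
    have hsum : ∑ i ∈ Icc 2 m, (((1 + i) / (i + 1) : ℕ) : ℤ) = m - 1 := by
      rw [sum_congr rfl fun i _ => by rw [add_comm 1 i, Nat.div_self (by omega)]]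
      simp only [Nat.cast_one, sum_const, Nat.card_Icc, nsmul_eq_mul, mul_one]
      omega
    rw [Fintype.card_prod, Fintype.card_fin, Fintype.card_fin] at hχ
    rw [hsum]
    norm_num
    omega
  · have h := packingChromatic_add_sum_card_le _ (m + 1) _
      (isPacking_pathLexCompleteColoring (n := n) (preconnected_top (V := Fin m)))
    rw [sum_card_filter_pathLexCompleteColoring hn2 (by omega), Fintype.card_prod,
      Fintype.card_fin, Fintype.card_fin] at h
    rw [← Nat.cast_sum]
    omega
end

section
/- For any graph G, χ_ρ(G) ≥ |V(G)| − α(G) − Σ_{i=2}^{diam(G)−1} ρ_i(G) + d(G), where d(G) = 1 if G is complete and d(G) = diam(G) − 1 otherwise. -/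
open SimpleGraph

/-- The independence number: the largest cardinality of an independent set. -/
noncomputable def SimpleGraph.indepNumOld {α : Type*} [Fintype α] (G : SimpleGraph α) : ℕ :=
  sSup {n | ∃ s : Finset α, G.IndepSet ↑s ∧ s.card = n}

/-! Let `X_1, …, X_k` be the colour classes of an optimal packing colouring; `X_i` is an
`i`-packing, so `|V| ≤ ∑_{i ≤ k} ρ_i`. Every `ρ_i ≥ 1`, and `ρ_i ≤ 1` once `i ≥ diam G` since no
two vertices are farther apart. Hence the excesses `ρ_i - 1` vanish beyond `diam G - 1`, and
`|V| - k ≤ ∑_{i ≤ k} (ρ_i - 1) ≤ ∑_{i=1}^{diam G - 1} (ρ_i - 1)`. Finally `ρ_1 ≤ α`, and for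
complete `G` the last sum is empty. -/

lemma Finset.sum_sub_one_add_card {ι : Type*} (s : Finset ι) {f : ι → ℕ}
    (hf : ∀ i ∈ s, 1 ≤ f i) : ∑ i ∈ s, (f i - 1) + s.card = ∑ i ∈ s, f i := by
  rw [Finset.card_eq_sum_ones, ← Finset.sum_add_distrib]
  exact Finset.sum_congr rfl fun i hi => Nat.sub_add_cancel (hf i hi)

namespace SimpleGraph

lemma diam_top_le_one {α : Type*} : (⊤ : SimpleGraph α).diam ≤ 1 := by
  rcases subsingleton_or_nontrivial α with _ | _
  · exact (diam_eq_zero.mpr (Or.inr ‹_›)).trans_le zero_le_one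
  · exact diam_top.le

variable {α : Type*} [Fintype α] (G : SimpleGraph α)

lemma two_le_diam (hG : G.Connected) (hT : G ≠ ⊤) : 2 ≤ G.diam := by
  have : Nontrivial α := by
    by_contra h
    rw [not_nontrivial_iff_subsingleton] at h
    exact hT (Subsingleton.elim _ _)
  have h0 := connected_iff_diam_ne_zero.mp hG
  have h1 : G.diam ≠ 1 := fun h => hT (diam_eq_one.mp h)
  omega

lemma bddAbove_card_setOf (P : Finset α → Prop) :
    BddAbove {n | ∃ s : Finset α, P s ∧ s.card = n} :=
  ⟨Fintype.card α, by rintro n ⟨s, -, rfl⟩; exact s.card_le_univ⟩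

lemma card_le_indepNumOld {s : Finset α} (hs : G.IndepSet s) : s.card ≤ G.indepNumOld :=
  le_csSup (bddAbove_card_setOf _) ⟨s, hs, rfl⟩

lemma card_le_packingNum {i : ℕ} {s : Finset α} (hs : G.IsPacking i s) :
    s.card ≤ G.packingNum i :=
  le_csSup (bddAbove_card_setOf _) ⟨s, hs, rfl⟩

lemma packingNum_le {i m : ℕ} (h : ∀ s : Finset α, G.IsPacking i s → s.card ≤ m) :
    G.packingNum i ≤ m :=
  csSup_le ⟨0, ∅, by simp [IsPacking]⟩ (by rintro _ ⟨s, hs, rfl⟩; exact h s hs)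

lemma one_le_packingNum [Nonempty α] (i : ℕ) : 1 ≤ G.packingNum i := by
  obtain ⟨v⟩ := ‹Nonempty α›
  refine (Finset.card_singleton v).symm.le.trans (G.card_le_packingNum ?_)
  simp [IsPacking]

lemma packingNum_one_le_indepNumOld : G.packingNum 1 ≤ G.indepNumOld :=
  G.packingNum_le fun _ hs => G.card_le_indepNumOld fun u hu v hv huv hadj =>
    (hs u hu v hv huv).ne' (dist_eq_one_iff_adj.mpr hadj)

lemma packingNum_le_one_of_diam_le (hG : G.Connected) {i : ℕ} (hi : G.diam ≤ i) :
    G.packingNum i ≤ 1 := by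
  have : Nonempty α := hG.nonempty
  refine G.packingNum_le fun s hs => Finset.card_le_one.mpr fun u hu v hv => ?_
  by_contra huv
  have := G.dist_le_diam (connected_iff_ediam_ne_top.mp hG) (u := u) (v := v)
  exact absurd (hs u hu v hv huv) (by omega)

lemma exists_isPackingColoring_packingChromatic :
    ∃ c : α → ℕ, G.IsPackingColoring G.packingChromatic c := by
  let e := Fintype.equivFin α
  have hne : {k | ∃ c : α → ℕ, G.IsPackingColoring k c}.Nonempty :=
    ⟨Fintype.card α, fun v => e v + 1, fun v => by simp,
      fun u v huv hcv => absurd (e.injective (Fin.ext (by simpa using hcv))) huv⟩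
  exact Nat.sInf_mem hne

namespace IsPackingColoring

variable {G} {k : ℕ} {c : α → ℕ} (hc : G.IsPackingColoring k c)
include hc

lemma isPacking_colorClass (i : ℕ) : G.IsPacking i ↑(Finset.univ.filter fun v => c v = i) := by
  intro u hu v hv huv
  simp only [Finset.coe_filter, Finset.mem_univ, true_and] at hu hv
  have := hc.2 u v huv (hu.trans hv.symm)
  rwa [hu] at this

lemma card_le_sum_packingNum : Fintype.card α ≤ ∑ i ∈ Finset.Icc 1 k, G.packingNum i := by
  classical
  calc Fintype.card α = ∑ i ∈ Finset.Icc 1 k, (Finset.univ.filter fun v => c v = i).card :=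
        Finset.card_eq_sum_card_fiberwise fun v _ => hc.1 v
    _ ≤ _ := Finset.sum_le_sum fun i _ => G.card_le_packingNum (hc.isPacking_colorClass i)

lemma card_add_diam_le (hG : G.Connected) :
    Fintype.card α + (G.diam - 1) ≤ k + ∑ i ∈ Finset.Icc 1 (G.diam - 1), G.packingNum i := by
  have : Nonempty α := hG.nonempty
  have hexcess : ∑ i ∈ Finset.Icc 1 k, (G.packingNum i - 1)
      ≤ ∑ i ∈ Finset.Icc 1 (G.diam - 1), (G.packingNum i - 1) := by
    refine Finset.sum_le_sum_of_ne_zero fun i hi hne => ?_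
    have := G.packingNum_le_one_of_diam_le hG (i := i)
    simp only [Finset.mem_Icc] at hi ⊢
    omega
  have hk := (Finset.Icc 1 k).sum_sub_one_add_card fun i _ => G.one_le_packingNum i
  have hD := (Finset.Icc 1 (G.diam - 1)).sum_sub_one_add_card fun i _ => G.one_le_packingNum i
  simp only [Nat.card_Icc, Nat.add_sub_cancel] at hk hD
  have := hc.card_le_sum_packingNum
  omega

end IsPackingColoring

end SimpleGraph

theorem packingChromatic_lower {α : Type*} [Fintype α]
    (G : SimpleGraph α) (hG : G.Connected) :
    (Fintype.card α : ℤ) - (G.indepNumOld : ℤ)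
        - ∑ i ∈ Finset.Icc 2 (G.diam - 1), (G.packingNum i : ℤ) + (G.dval : ℤ)
      ≤ (G.packingChromatic : ℤ) := by
  have : Nonempty α := hG.nonempty
  obtain ⟨c, hc⟩ := G.exists_isPackingColoring_packingChromatic
  have hbound := hc.card_add_diam_le hG
  have hα := G.packingNum_one_le_indepNumOld
  have hρ₁ := G.one_le_packingNum 1
  by_cases hT : G = ⊤
  · have hD : G.diam - 1 = 0 := by have := hT ▸ diam_top_le_one (α := α); omega
    have hdval : G.dval = 1 := by simp [dval, hT]
    rw [hD, Finset.Icc_eq_empty (by omega), Finset.sum_empty] at hbound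
    rw [hD, hdval, Finset.Icc_eq_empty (by omega), Finset.sum_empty]
    omega
  · have hD := G.two_le_diam hG hT
    have hdval : G.dval = G.diam - 1 := by simp [dval, hT]
    rw [← Finset.insert_Icc_succ_left_eq_Icc (by omega : 1 ≤ G.diam - 1),
      Finset.sum_insert (by simp)] at hbound
    simp only [Order.succ_eq_add_one, Nat.reduceAdd] at hbound
    rw [hdval, ← Nat.cast_sum]
    omega
end

section
/- Let G be a connected graph with diam(G) ≥ 2 and H any graph. In any packing coloring of G∘H, at most one vertex receives each color i with i ≥ diam(G), and at most ρ_i(G) vertices receive color i for each 2 ≤ i ≤ diam(G) − 1. -/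
open SimpleGraph

/-! Distances in `G ∘ H` are controlled by `G`: vertices in different fibres `{g} × V(H)` are
at most `d_G` apart, and vertices in one fibre at most 2 apart, through a neighbour in `G`. Hence a
colour class of a colour `i ≥ 2` meets each fibre at most once and projects to an `i`-packing of
`G`, while for `i ≥ diam G` no two vertices are more than `i` apart. -/

namespace SimpleGraph

variable {α β : Type*} {G : SimpleGraph α} {H : SimpleGraph β}

variable (G) in
def lexProdLeft (H : SimpleGraph β) (b : β) : G →g G.lexProd H where
  toFun a := (a, b)
  map_rel' := Or.inl

theorem lexProd_dist_le_dist {u v : α × β} (hr : G.Reachable u.1 v.1) (hne : u.1 ≠ v.1) :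
    (G.lexProd H).dist u v ≤ G.dist u.1 v.1 := by
  obtain ⟨a, x⟩ := u
  obtain ⟨b, y⟩ := v
  obtain ⟨p, hp⟩ := hr.exists_walk_length_eq_dist
  cases p with
  | nil => exact absurd rfl hne
  | cons hadj p =>
    have hxw : (G.lexProd H).Adj (a, x) (G.lexProdLeft H y _) := Or.inl hadj
    calc (G.lexProd H).dist (a, x) (b, y)
        ≤ (Walk.cons hxw (p.map (G.lexProdLeft H y))).length := dist_le _
      _ = G.dist a b := by simpa using hp

theorem lexProd_dist_le_two {u v : α × β} {w : α} (hw : G.Adj u.1 w) (h : u.1 = v.1) :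
    (G.lexProd H).dist u v ≤ 2 := by
  obtain ⟨a, x⟩ := u
  obtain ⟨b, y⟩ := v
  obtain rfl : a = b := h
  have hxw : (G.lexProd H).Adj (a, x) (w, x) := Or.inl hw
  have hwy : (G.lexProd H).Adj (w, x) (a, y) := Or.inl hw.symm
  exact dist_le (.cons hxw (.cons hwy .nil))

theorem lexProd_dist_le_max_two_diam (hd : G.diam ≠ 0) (u v : α × β) :
    (G.lexProd H).dist u v ≤ max 2 G.diam := by
  have : Nontrivial α := G.nontrivial_of_diam_ne_zero hd
  have hdiam : G.ediam ≠ ⊤ := G.ediam_ne_top_of_diam_ne_zero hd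
  have hG : G.Preconnected := G.preconnected_of_ediam_ne_top hdiam
  by_cases h : u.1 = v.1
  · obtain ⟨w, hw⟩ := hG.exists_adj_of_nontrivial u.1
    exact (lexProd_dist_le_two hw h).trans (le_max_left _ _)
  · exact (lexProd_dist_le_dist (hG u.1 v.1) h).trans
      ((G.dist_le_diam hdiam).trans (le_max_right _ _))

namespace IsPacking

variable {i : ℕ} {s : Set (α × β)}

theorem subsingleton_of_max_two_diam_le (hs : (G.lexProd H).IsPacking i s) (hd : G.diam ≠ 0)
    (hi : max 2 G.diam ≤ i) : s.Subsingleton := fun u hu v hv ↦ by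
  by_contra hne
  have := hs u hu v hv hne
  have := lexProd_dist_le_max_two_diam (H := H) hd u v
  omega

theorem injOn_fst_of_two_le (hs : (G.lexProd H).IsPacking i s) (hG : G.Preconnected)
    [Nontrivial α] (hi : 2 ≤ i) : s.InjOn Prod.fst := fun u hu v hv h ↦ by
  by_contra hne
  obtain ⟨w, hw⟩ := hG.exists_adj_of_nontrivial u.1
  have := hs u hu v hv hne
  have := lexProd_dist_le_two (H := H) hw h
  omega

theorem image_fst (hs : (G.lexProd H).IsPacking i s) (hG : G.Preconnected) :
    G.IsPacking i (Prod.fst '' s) := by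
  rintro _ ⟨u, hu, rfl⟩ _ ⟨v, hv, rfl⟩ hne
  exact (hs u hu v hv (fun h ↦ hne (congrArg Prod.fst h))).trans_le
    (lexProd_dist_le_dist (hG u.1 v.1) hne)

theorem ncard_le_packingNum [Fintype α] {t : Set α} (ht : G.IsPacking i t) :
    t.ncard ≤ G.packingNum i := by
  classical
  refine le_csSup ⟨Fintype.card α, ?_⟩ ⟨t.toFinset, by simpa using ht, ?_⟩
  · rintro n ⟨r, -, rfl⟩
    exact r.card_le_univ
  · rw [Set.ncard_eq_toFinset_card']

end IsPacking

end SimpleGraph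

theorem packingColoring_color_classes_general {α β : Type*} [Fintype α]
    (G : SimpleGraph α) (H : SimpleGraph β) (hd : 2 ≤ G.diam)
    (c : α × β → ℕ)
    (hc : ∀ u v, u ≠ v → c u = c v → c u < (G.lexProd H).dist u v) :
    (∀ i, G.diam ≤ i → ({v | c v = i} : Set (α × β)).Subsingleton) ∧
    (∀ i, 2 ≤ i → i ≤ G.diam - 1 →
      ({v | c v = i} : Set (α × β)).ncard ≤ G.packingNum i) := by
  have hd₀ : G.diam ≠ 0 := by omega
  have : Nontrivial α := G.nontrivial_of_diam_ne_zero hd₀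
  have hG : G.Preconnected := G.preconnected_of_ediam_ne_top (G.ediam_ne_top_of_diam_ne_zero hd₀)
  have hclass (i : ℕ) : (G.lexProd H).IsPacking i {v | c v = i} :=
    fun u (hu : c u = i) v (hv : c v = i) hne ↦ hu ▸ hc u v hne (hu.trans hv.symm)
  refine ⟨fun i hi ↦ (hclass i).subsingleton_of_max_two_diam_le hd₀ (by omega),
    fun i hi _ ↦ ?_⟩
  rw [← ((hclass i).injOn_fst_of_two_le hG hi).ncard_image]
  exact ((hclass i).image_fst hG).ncard_le_packingNum

theorem packingColoring_color_classes {α β : Type*} [Fintype α] [Fintype β]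
    (G : SimpleGraph α) (H : SimpleGraph β) (hG : G.Connected) (hd : 2 ≤ G.diam)
    (c : α × β → ℕ)
    (hc : ∀ u v, u ≠ v → c u = c v → c u < (G.lexProd H).dist u v) :
    (∀ i, G.diam ≤ i → ({v | c v = i} : Set (α × β)).Subsingleton) ∧
    (∀ i, 2 ≤ i → i ≤ G.diam - 1 →
      ({v | c v = i} : Set (α × β)).ncard ≤ G.packingNum i) :=
  packingColoring_color_classes_general G H hd c hc
end
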